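/- arXiv:1807.01647 — 6 statements merged into one kernel-verified Lean document; each statement's English description precedes it below -/
import Mathlib

section
/- Pointwise identity underlying advanced joint convexity: with μ = (1−η)μ₀ + ημ₁, μ' = (1−η)μ₀ + ημ₁', α' = 1 + η(α−1), β = α'/α, for every point z: max(μ(z) − α'μ'(z), 0) = η · max(μ₁(z) − α((1−β)μ₀(z) + βμ₁'(z)), 0). -/
open Real

/-- Pointwise identity underlying advanced joint convexity. -/
theorem advanced_joint_convexity_pointwise
    (a₀ a₁ a₁' : ℝ) (h₀ : 0 ≤ a₀) (h₁ : 0 ≤ a₁) (h₁' : 0 ≤ a₁')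
    (η α : ℝ) (hη : η ∈ Set.Icc (0:ℝ) 1) (hα : 1 ≤ α) :
    max ((1 - η) * a₀ + η * a₁
        - (1 + η * (α - 1)) * ((1 - η) * a₀ + η * a₁')) 0
      = η * max (a₁
          - α * ((1 - (1 + η * (α - 1)) / α) * a₀
                 + ((1 + η * (α - 1)) / α) * a₁')) 0 := by
  have hα0 : α ≠ 0 := by linarith
  have key : (1 - η) * a₀ + η * a₁
        - (1 + η * (α - 1)) * ((1 - η) * a₀ + η * a₁')
      = η * (a₁ - α * ((1 - (1 + η * (α - 1)) / α) * a₀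
                 + ((1 + η * (α - 1)) / α) * a₁')) := by
    field_simp
    ring
  rw [key, mul_max_of_nonneg _ _ hη.1, mul_zero]
end

section
/- Combining advanced joint convexity with ordinary joint convexity: under the hypotheses μ = (1−η)μ₀ + ημ₁, μ' = (1−η)μ₀ + ημ₁', α' = 1+η(α−1), β = α'/α, one has D_{α'}(μ‖μ') ≤ (1−β)η D_α(μ₁‖μ₀) + βη D_α(μ₁‖μ₁'). -/
open MeasureTheory Real

/-- Hockey-stick divergence `D_α(μ‖μ') = sup_E (μ(E) - α μ'(E))`. -/
noncomputable def hsDiv {Z : Type*} [MeasurableSpace Z] (α : ℝ) (μ μ' : Measure Z) : ℝ :=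
  sSup {d : ℝ | ∃ E : Set Z, MeasurableSet E ∧ d = (μ E).toReal - α * (μ' E).toReal}

lemma hsDiv_bddAbove {Z : Type*} [MeasurableSpace Z] (α : ℝ) (μ μ' : Measure Z)
    [IsFiniteMeasure μ] (hα : 0 ≤ α) :
    BddAbove {d : ℝ | ∃ E : Set Z, MeasurableSet E ∧ d = (μ E).toReal - α * (μ' E).toReal} := by
  refine ⟨(μ Set.univ).toReal, ?_⟩
  rintro d ⟨E, hE, rfl⟩
  have h1 : (μ E).toReal ≤ (μ Set.univ).toReal :=
    ENNReal.toReal_mono (measure_ne_top _ _) (measure_mono (Set.subset_univ _))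
  have h2 : 0 ≤ α * (μ' E).toReal := mul_nonneg hα ENNReal.toReal_nonneg
  linarith

lemma hsDiv_nonneg {Z : Type*} [MeasurableSpace Z] (α : ℝ) (μ μ' : Measure Z)
    [IsFiniteMeasure μ] (hα : 0 ≤ α) : 0 ≤ hsDiv α μ μ' :=
  le_csSup (hsDiv_bddAbove α μ μ' hα) ⟨∅, MeasurableSet.empty, by simp⟩

/-- Advanced joint convexity combined with ordinary joint convexity:
`D_{α'}(μ‖μ') ≤ (1-β)η D_α(μ₁‖μ₀) + βη D_α(μ₁‖μ₁')`. -/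
theorem advanced_joint_convexity_bound {Z : Type*} [MeasurableSpace Z]
    (μ₀ μ₁ μ₁' : Measure Z)
    [IsProbabilityMeasure μ₀] [IsProbabilityMeasure μ₁] [IsProbabilityMeasure μ₁']
    (η α : ℝ) (hη : η ∈ Set.Icc (0:ℝ) 1) (hα : 1 ≤ α) :
    hsDiv (1 + η * (α - 1))
        (ENNReal.ofReal (1 - η) • μ₀ + ENNReal.ofReal η • μ₁)
        (ENNReal.ofReal (1 - η) • μ₀ + ENNReal.ofReal η • μ₁')
      ≤ (1 - (1 + η * (α - 1)) / α) * η * hsDiv α μ₁ μ₀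
        + ((1 + η * (α - 1)) / α) * η * hsDiv α μ₁ μ₁' := by
  obtain ⟨hη0, hη1⟩ := hη
  have hαpos : (0:ℝ) < α := lt_of_lt_of_le one_pos hα
  set α' : ℝ := 1 + η * (α - 1) with hα'
  have hα'1 : 1 ≤ α' := by nlinarith
  have hα'α : α' ≤ α := by nlinarith
  set β : ℝ := α' / α with hβ
  have hβ0 : 0 ≤ β := div_nonneg (by linarith) hαpos.le
  have hβ1 : β ≤ 1 := (div_le_one hαpos).mpr hα'α
  have hc1 : 0 ≤ (1 - β) * η := mul_nonneg (by linarith) hη0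
  have hc2 : 0 ≤ β * η := mul_nonneg hβ0 hη0
  have hs1 : 0 ≤ hsDiv α μ₁ μ₀ := hsDiv_nonneg α μ₁ μ₀ (by linarith)
  have hs2 : 0 ≤ hsDiv α μ₁ μ₁' := hsDiv_nonneg α μ₁ μ₁' (by linarith)
  apply Real.sSup_le
  · rintro d ⟨E, hE, rfl⟩
    have happ : ∀ (ν ν' : Measure Z) [IsFiniteMeasure ν] [IsFiniteMeasure ν'], ((ENNReal.ofReal (1 - η) • ν + ENNReal.ofReal η • ν') E).toReal
        = (1 - η) * (ν E).toReal + η * (ν' E).toReal := by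
      intro ν ν' _ _
      simp only [Measure.coe_add, Pi.add_apply, Measure.coe_smul, Pi.smul_apply, smul_eq_mul]
      rw [ENNReal.toReal_add (ENNReal.mul_ne_top ENNReal.ofReal_ne_top (measure_ne_top _ _)) (ENNReal.mul_ne_top ENNReal.ofReal_ne_top (measure_ne_top _ _)), ENNReal.toReal_mul,
        ENNReal.toReal_mul, ENNReal.toReal_ofReal (by linarith), ENNReal.toReal_ofReal hη0]
    set a := (μ₀ E).toReal
    set b := (μ₁ E).toReal
    set b' := (μ₁' E).toReal
    have ha0 : 0 ≤ a := ENNReal.toReal_nonneg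
    have hd1 : b - α * a ≤ hsDiv α μ₁ μ₀ :=
      le_csSup (hsDiv_bddAbove α μ₁ μ₀ (by linarith)) ⟨E, hE, rfl⟩
    have hd2 : b - α * b' ≤ hsDiv α μ₁ μ₁' :=
      le_csSup (hsDiv_bddAbove α μ₁ μ₁' (by linarith)) ⟨E, hE, rfl⟩
    rw [happ μ₀ μ₁, happ μ₀ μ₁']
    have key : (1 - η) * a + η * b - α' * ((1 - η) * a + η * b')
        = (1 - β) * η * (b - α * a) + β * η * (b - α * b') := by
      rw [hβ, hα']
      field_simp
      ring
    rw [key]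
    have := mul_le_mul_of_nonneg_left hd1 hc1
    have := mul_le_mul_of_nonneg_left hd2 hc2
    linarith
  · positivity
end

section
/- Privacy profile of the Laplace mechanism: if M(x) = f(x) + Lap(b) where f has global sensitivity Δ = sup_{x≃x'} |f(x)−f(x')|, then for all ε ≥ 0, sup_{x≃x'} D_{e^ε}(M(x)‖M(x')) = max(1 − exp((ε − Δ/b)/2), 0). Equivalently, for 0 ≤ ε ≤ Δ/b, D_{e^ε}(Lap(b) ‖ Δ + Lap(b)) = 1 − exp((ε − Δ/b)/2), and it is 0 for ε > Δ/b. -/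
/-! The likelihood ratio of `Lap(b)` against `Δ + Lap(b)` at `z` is `exp ((|z - Δ| - |z|) / b)`,
and `|z - Δ| - |z|` is `Δ - 2z` clamped to `[-Δ, Δ]`, so nonincreasing in `z`. Hence for `εb ≤ Δ`
the integrand of `D_{e^ε}` is positive exactly on the half-line `z ≤ t := (Δ - εb) / 2`, and the
divergence is `P(Lap(b) ≤ t) - e^ε P(Lap(b) ≤ t - Δ) = (1 - e^{-t/b} / 2) - e^ε e^{(t - Δ)/b} / 2`,
where both exponents equal `(ε - Δ/b) / 2`. For `εb ≥ Δ` the integrand vanishes. -/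

open Real Set MeasureTheory

lemma setIntegral_Iic_comp_sub_right {E : Type*} [NormedAddCommGroup E] [NormedSpace ℝ E]
    (f : ℝ → E) (t d : ℝ) : ∫ x in Iic t, f (x - d) = ∫ x in Iic (t - d), f x := by
  simpa using (measurePreserving_sub_right volume d).setIntegral_preimage_emb
    (measurableEmbedding_subRight d) f (Iic (t - d))

lemma max_zero_eq_indicator {α : Type*} {s : Set α} {f : α → ℝ} (h₁ : ∀ x ∈ s, 0 ≤ f x)
    (h₂ : ∀ x ∉ s, f x ≤ 0) : (fun x => max (f x) 0) = s.indicator f := by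
  ext x
  by_cases hx : x ∈ s
  · rw [indicator_of_mem hx, max_eq_left (h₁ x hx)]
  · rw [indicator_of_notMem hx, max_eq_right (h₂ x hx)]

noncomputable def laplaceDensity (b z : ℝ) : ℝ := 1 / (2 * b) * exp (-|z| / b)

section

variable {b ε Δ : ℝ}

lemma laplaceDensity_nonneg (hb : 0 ≤ b) (z : ℝ) : 0 ≤ laplaceDensity b z := by
  unfold laplaceDensity
  positivity

lemma integral_laplaceDensity_Iic_of_nonpos (hb : 0 < b) {t : ℝ} (ht : t ≤ 0) :
    ∫ z in Iic t, laplaceDensity b z = exp (t / b) / 2 := by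
  have hb' : 0 < 1 / b := by positivity
  rw [setIntegral_congr_fun measurableSet_Iic (g := fun z => 1 / (2 * b) * exp (1 / b * z))
      fun z hz => by simp [laplaceDensity, abs_of_nonpos (hz.trans ht), div_eq_inv_mul],
    integral_const_mul, integral_exp_mul_Iic hb']
  field_simp

lemma integral_laplaceDensity_Ioi_of_nonneg (hb : 0 < b) {t : ℝ} (ht : 0 ≤ t) :
    ∫ z in Ioi t, laplaceDensity b z = exp (-t / b) / 2 := by
  have hb' : -(1 / b) < 0 := by simp [hb]
  rw [setIntegral_congr_fun measurableSet_Ioi (g := fun z => 1 / (2 * b) * exp (-(1 / b) * z))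
      fun z hz => by simp [laplaceDensity, abs_of_pos (ht.trans_lt hz), div_eq_inv_mul],
    integral_const_mul, integral_exp_mul_Ioi hb']
  field_simp

lemma integrable_laplaceDensity (hb : 0 < b) : Integrable (laplaceDensity b) := by
  have hleft : IntegrableOn (laplaceDensity b) (Iic 0) := by
    refine IntegrableOn.congr_fun
      ((integrableOn_exp_mul_Iic (one_div_pos.mpr hb) 0).const_mul (1 / (2 * b)))
      (fun z hz => ?_) measurableSet_Iic
    simp [laplaceDensity, abs_of_nonpos (show z ≤ 0 from hz), div_eq_inv_mul]
  have hright : IntegrableOn (laplaceDensity b) (Ioi 0) := by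
    refine IntegrableOn.congr_fun
      ((integrableOn_exp_mul_Ioi (neg_neg_of_pos (one_div_pos.mpr hb)) 0).const_mul (1 / (2 * b)))
      (fun z hz => ?_) measurableSet_Ioi
    simp [laplaceDensity, abs_of_pos (show 0 < z from hz), div_eq_inv_mul]
  rw [← integrableOn_univ, ← Iic_union_Ioi (a := (0 : ℝ))]
  exact hleft.union hright

lemma integral_laplaceDensity (hb : 0 < b) : ∫ z, laplaceDensity b z = 1 := by
  rw [← intervalIntegral.integral_Iic_add_Ioi (integrable_laplaceDensity hb).integrableOn
      (integrable_laplaceDensity hb).integrableOn,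
    integral_laplaceDensity_Iic_of_nonpos hb le_rfl,
    integral_laplaceDensity_Ioi_of_nonneg hb le_rfl]
  norm_num

lemma integral_laplaceDensity_Iic_of_nonneg (hb : 0 < b) {t : ℝ} (ht : 0 ≤ t) :
    ∫ z in Iic t, laplaceDensity b z = 1 - exp (-t / b) / 2 := by
  rw [← integral_laplaceDensity hb, ← intervalIntegral.integral_Iic_add_Ioi (b := t)
      (integrable_laplaceDensity hb).integrableOn (integrable_laplaceDensity hb).integrableOn,
    integral_laplaceDensity_Ioi_of_nonneg hb ht, add_sub_cancel_right]

lemma exp_mul_laplaceDensity_sub (hb : 0 < b) (z : ℝ) :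
    exp ε * laplaceDensity b (z - Δ)
      = laplaceDensity b z * exp ((ε * b - (|z - Δ| - |z|)) / b) := by
  simp only [laplaceDensity]
  rw [mul_left_comm, mul_assoc, ← exp_add, ← exp_add]
  congr 2
  field_simp
  ring

lemma integral_max_laplaceDensity_sub_eq_zero (hb : 0 < b) (h : |Δ| ≤ ε * b) :
    ∫ z, max (laplaceDensity b z - exp ε * laplaceDensity b (z - Δ)) 0 = 0 := by
  have hz : ∀ z, laplaceDensity b z - exp ε * laplaceDensity b (z - Δ) ≤ 0 := by
    intro z
    rw [exp_mul_laplaceDensity_sub hb, sub_nonpos]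
    refine le_mul_of_one_le_right (laplaceDensity_nonneg hb.le z) (one_le_exp ?_)
    have := abs_sub_abs_le_abs_sub (z - Δ) z
    rw [sub_sub_cancel_left, abs_neg] at this
    exact div_nonneg (by linarith) hb.le
  simp_rw [max_eq_right (hz _), integral_zero]

lemma integral_max_laplaceDensity_sub_eq (hb : 0 < b) (h₁ : -Δ ≤ ε * b) (h₂ : ε * b ≤ Δ) :
    ∫ z, max (laplaceDensity b z - exp ε * laplaceDensity b (z - Δ)) 0
      = 1 - exp ((ε - Δ / b) / 2) := by
  have hpos : ∀ z ∈ Iic ((Δ - ε * b) / 2),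
      0 ≤ laplaceDensity b z - exp ε * laplaceDensity b (z - Δ) := by
    intro z hz
    rw [exp_mul_laplaceDensity_sub hb, sub_nonneg]
    refine mul_le_of_le_one_right (laplaceDensity_nonneg hb.le z) (exp_le_one_iff.mpr ?_)
    have : z ≤ (Δ - ε * b) / 2 := hz
    refine div_nonpos_of_nonpos_of_nonneg ?_ hb.le
    cases abs_cases z <;> cases abs_cases (z - Δ) <;> linarith
  have hneg : ∀ z ∉ Iic ((Δ - ε * b) / 2),
      laplaceDensity b z - exp ε * laplaceDensity b (z - Δ) ≤ 0 := by
    intro z hz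
    rw [exp_mul_laplaceDensity_sub hb, sub_nonpos]
    refine le_mul_of_one_le_right (laplaceDensity_nonneg hb.le z) (one_le_exp ?_)
    have : (Δ - ε * b) / 2 < z := not_le.mp hz
    refine div_nonneg ?_ hb.le
    cases abs_cases z <;> cases abs_cases (z - Δ) <;> linarith
  have hint := integrable_laplaceDensity hb
  rw [max_zero_eq_indicator hpos hneg, integral_indicator measurableSet_Iic,
    integral_sub hint.integrableOn ((hint.comp_sub_right Δ).const_mul _).integrableOn,
    integral_const_mul, setIntegral_Iic_comp_sub_right (laplaceDensity b),
    integral_laplaceDensity_Iic_of_nonneg hb (by linarith),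
    integral_laplaceDensity_Iic_of_nonpos hb (by linarith), mul_div_assoc', ← exp_add]
  have h₃ : -((Δ - ε * b) / 2) / b = (ε - Δ / b) / 2 := by field_simp; ring
  have h₄ : ε + ((Δ - ε * b) / 2 - Δ) / b = (ε - Δ / b) / 2 := by field_simp; ring
  rw [h₃, h₄]
  ring

end

/-- Privacy profile of the Laplace mechanism:
`D_{e^ε}(Lap(b) ‖ Δ + Lap(b)) = max(1 - exp((ε - Δ/b)/2), 0)` for all `ε ≥ 0`. -/
theorem laplace_privacy_profile (b Δ : ℝ) (hb : 0 < b) (hΔ : 0 < Δ)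
    (ε : ℝ) (hε : 0 ≤ ε) :
    ∫ z : ℝ, max ((1 / (2 * b)) * exp (-|z| / b)
        - exp ε * ((1 / (2 * b)) * exp (-|z - Δ| / b))) 0
      = max (1 - exp ((ε - Δ / b) / 2)) 0 := by
  change ∫ z, max (laplaceDensity b z - exp ε * laplaceDensity b (z - Δ)) 0 = _
  rcases le_total (ε * b) Δ with h | h
  · have hexp : exp ((ε - Δ / b) / 2) ≤ 1 :=
      exp_le_one_iff.mpr (by linarith [(le_div_iff₀ hb).mpr h])
    rw [integral_max_laplaceDensity_sub_eq hb (by linarith [mul_nonneg hε hb.le]) h,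
      max_eq_left (by linarith)]
  · have hexp : 1 ≤ exp ((ε - Δ / b) / 2) :=
      one_le_exp (by linarith [(div_le_iff₀ hb).mpr h])
    rw [integral_max_laplaceDensity_sub_eq_zero hb (by rwa [abs_of_pos hΔ]),
      max_eq_right (by linarith)]
end

section
/- Characterization of divergence via the privacy loss random variable: for probability measures μ, μ' with densities p, q (mutually absolutely continuous), and L = log(p(Z)/q(Z)) with Z ∼ μ, L' = log(q(Z')/p(Z')) with Z' ∼ μ', one has D_{e^ε}(μ‖μ') = Pr[L > ε] − e^ε Pr[L' < −ε]. -/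
/-! Both privacy-loss events are the event `{e^ε q < p}`, so the right-hand side is the integral
of `p - e^ε q` over that event, which is the integral of the positive part `max (p - e^ε q) 0`. -/

open MeasureTheory Real

lemma lt_log_div_iff {a x y : ℝ} (hx : 0 < x) (hy : 0 < y) :
    a < log (x / y) ↔ exp a * y < x := by
  rw [lt_log_iff_exp_lt (div_pos hx hy), lt_div_iff₀ hy]

lemma log_div_lt_neg_iff {a x y : ℝ} : log (y / x) < -a ↔ a < log (x / y) := by
  rw [← inv_div x y, log_inv, neg_lt_neg_iff]

section WithDensity

variable {Z : Type*} [MeasurableSpace Z] {ν : Measure Z}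

lemma integrable_of_isFiniteMeasure_withDensity_ofReal {g : Z → ℝ}
    (hg : AEStronglyMeasurable g ν) (hg0 : 0 ≤ᵐ[ν] g)
    [IsFiniteMeasure (ν.withDensity fun z => ENNReal.ofReal (g z))] : Integrable g ν := by
  refine (lintegral_ofReal_ne_top_iff_integrable hg hg0).1 ?_
  rw [← setLIntegral_univ, ← withDensity_apply _ .univ]
  exact measure_ne_top _ _

lemma toReal_withDensity_ofReal_apply {g : Z → ℝ}
    (hg : AEStronglyMeasurable g ν) (hg0 : 0 ≤ᵐ[ν] g) {S : Set Z} (hS : MeasurableSet S) :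
    ((ν.withDensity fun z => ENNReal.ofReal (g z)) S).toReal = ∫ z in S, g z ∂ν := by
  rw [withDensity_apply _ hS,
    integral_eq_lintegral_of_nonneg_ae (ae_restrict_of_ae hg0) hg.restrict]

lemma integral_max_zero_eq_setIntegral {f : Z → ℝ} (hf : Measurable f) :
    ∫ z, max (f z) 0 ∂ν = ∫ z in {z | 0 < f z}, f z ∂ν := by
  rw [← integral_indicator (measurableSet_lt measurable_const hf)]
  congr 1 with z
  by_cases h : 0 < f z
  · simp [h, h.le]
  · simp [h, not_lt.1 h]

end WithDensity

theorem hsDiv_eq_privacy_loss_general {Z : Type*} [MeasurableSpace Z] (ν : Measure Z)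
    (p q : Z → ℝ) (hp : Measurable p) (hq : Measurable q)
    (hppos : ∀ z, 0 < p z) (hqpos : ∀ z, 0 < q z)
    (hμ : IsProbabilityMeasure (ν.withDensity fun z => ENNReal.ofReal (p z)))
    (hμ' : IsProbabilityMeasure (ν.withDensity fun z => ENNReal.ofReal (q z)))
    (ε : ℝ) :
    ∫ z, max (p z - exp ε * q z) 0 ∂ν
      = ((ν.withDensity fun z => ENNReal.ofReal (p z))
            {z | ε < Real.log (p z / q z)}).toReal
        - exp ε * ((ν.withDensity fun z => ENNReal.ofReal (q z))
            {z | Real.log (q z / p z) < -ε}).toReal := by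
  have hp0 : 0 ≤ᵐ[ν] p := .of_forall fun z => (hppos z).le
  have hq0 : 0 ≤ᵐ[ν] q := .of_forall fun z => (hqpos z).le
  have hip : Integrable p ν :=
    integrable_of_isFiniteMeasure_withDensity_ofReal hp.aestronglyMeasurable hp0
  have hiq : Integrable q ν :=
    integrable_of_isFiniteMeasure_withDensity_ofReal hq.aestronglyMeasurable hq0
  have hloss : {z | ε < log (p z / q z)} = {z | 0 < p z - exp ε * q z} := by
    ext z
    exact (lt_log_div_iff (hppos z) (hqpos z)).trans sub_pos.symm
  have hloss' : {z | log (q z / p z) < -ε} = {z | ε < log (p z / q z)} := by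
    ext z
    exact log_div_lt_neg_iff
  have hS : MeasurableSet {z | 0 < p z - exp ε * q z} :=
    measurableSet_lt measurable_const (by fun_prop)
  rw [hloss', hloss, toReal_withDensity_ofReal_apply hp.aestronglyMeasurable hp0 hS,
    toReal_withDensity_ofReal_apply hq.aestronglyMeasurable hq0 hS, ← integral_const_mul,
    ← integral_sub hip.integrableOn (hiq.const_mul _).integrableOn]
  exact integral_max_zero_eq_setIntegral (by fun_prop)

/-- Hockey-stick divergence via the privacy loss random variable:
`D_{e^ε}(μ‖μ') = Pr_{Z∼μ}[log(p/q)(Z) > ε] - e^ε · Pr_{Z'∼μ'}[log(q/p)(Z') < -ε]`. -/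
theorem hsDiv_eq_privacy_loss {Z : Type*} [MeasurableSpace Z] (ν : Measure Z)
    (p q : Z → ℝ) (hp : Measurable p) (hq : Measurable q)
    (hppos : ∀ z, 0 < p z) (hqpos : ∀ z, 0 < q z)
    (hμ : IsProbabilityMeasure (ν.withDensity fun z => ENNReal.ofReal (p z)))
    (hμ' : IsProbabilityMeasure (ν.withDensity fun z => ENNReal.ofReal (q z)))
    (ε : ℝ) (hε : 0 ≤ ε) :
    ∫ z, max (p z - exp ε * q z) 0 ∂ν
      = ((ν.withDensity fun z => ENNReal.ofReal (p z))
            {z | ε < Real.log (p z / q z)}).toReal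
        - exp ε * ((ν.withDensity fun z => ENNReal.ofReal (q z))
            {z | Real.log (q z / p z) < -ε}).toReal :=
  hsDiv_eq_privacy_loss_general ν p q hp hq hppos hqpos hμ hμ' ε
end

section
/- Intermediate MGF identity: with the notation above, φ(s) = (s+1) ∫₀^∞ D_{t^{1/s}}(μ‖μ') dt for s > 0, where D_α(μ‖μ') = ∫ max(p − αq, 0) dz is defined for all α > 0 (not just α ≥ 1). -/
/-!
For fixed `z`, the integrand `t ↦ max (p z - t ^ (1 / s) * q z) 0` vanishes beyond
`t = (p z / q z) ^ s`, and integrating the power `t ^ (1 / s)` up to that point gives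
`∫₀^∞ max (p z - t ^ (1 / s) * q z) 0 dt = (p z / q z) ^ s * p z / (s + 1)`.
Swapping the two integrals (Tonelli, after passing to `ℝ≥0∞`-valued integrands) turns the
right-hand side into `∫ (p / q) ^ s * p dν`, which is `φ(s)` written against `ν`.
-/

open MeasureTheory Real Set
open scoped ENNReal

namespace Real

variable {P Q s : ℝ}

lemma sub_rpow_one_div_mul_nonneg_iff (hP : 0 < P) (hQ : 0 < Q) (hs : 0 < s) {t : ℝ}
    (ht : 0 ≤ t) : 0 ≤ P - t ^ (1 / s) * Q ↔ t ≤ (P / Q) ^ s := by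
  rw [sub_nonneg, ← le_div_iff₀ hQ, one_div, rpow_inv_le_iff_of_pos ht (by positivity) hs]

lemma integral_sub_rpow_one_div_mul (hP : 0 < P) (hQ : 0 < Q) (hs : 0 < s) :
    ∫ t in (0 : ℝ)..(P / Q) ^ s, (P - t ^ (1 / s) * Q) = (P / Q) ^ s * P / (s + 1) := by
  have hexp : -1 < 1 / s := by linarith [one_div_pos.2 hs]
  have hpow : ((P / Q) ^ s) ^ (1 / s + 1) = P / Q * (P / Q) ^ s := by
    rw [rpow_add (by positivity), rpow_one, ← rpow_mul (by positivity),
      mul_one_div_cancel hs.ne', rpow_one]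
  rw [intervalIntegral.integral_sub intervalIntegrable_const
      ((intervalIntegral.intervalIntegrable_rpow' hexp).mul_const Q),
    intervalIntegral.integral_const, intervalIntegral.integral_mul_const,
    integral_rpow (Or.inl hexp), hpow, zero_rpow (by positivity)]
  field_simp
  ring

lemma lintegral_Ioi_ofReal_sub_rpow_one_div_mul (hP : 0 < P) (hQ : 0 < Q) (hs : 0 < s) :
    ∫⁻ t in Ioi 0, ENNReal.ofReal (P - t ^ (1 / s) * Q) =
      ENNReal.ofReal ((P / Q) ^ s * P / (s + 1)) := by
  set r := (P / Q) ^ s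
  have hr : 0 ≤ r := by positivity
  have hvanish : EqOn (fun t : ℝ => ENNReal.ofReal (P - t ^ (1 / s) * Q)) 0 (Ioi r) := by
    intro t ht
    simp only [Pi.zero_apply, ENNReal.ofReal_eq_zero]
    by_contra! h
    exact (not_le.2 (mem_Ioi.1 ht)) ((sub_rpow_one_div_mul_nonneg_iff hP hQ hs
      (hr.trans (le_of_lt ht))).1 h.le)
  have hint : IntegrableOn (fun t : ℝ => P - t ^ (1 / s) * Q) (Ioc 0 r) :=
    (continuous_const.sub ((continuous_rpow_const (by positivity)).mul
      continuous_const)).integrableOn_Ioc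
  rw [← Ioc_union_Ioi_eq_Ioi hr, lintegral_union measurableSet_Ioi Ioc_disjoint_Ioi_same,
    setLIntegral_eq_zero measurableSet_Ioi hvanish, add_zero,
    ← ofReal_integral_eq_lintegral_ofReal hint, ← intervalIntegral.integral_of_le hr,
    integral_sub_rpow_one_div_mul hP hQ hs]
  exact (ae_restrict_mem measurableSet_Ioc).mono fun t ht =>
    (sub_rpow_one_div_mul_nonneg_iff hP hQ hs ht.1.le).2 ht.2

end Real

section

variable {Z : Type*} [MeasurableSpace Z] {ν : Measure Z} {p q : Z → ℝ} {s : ℝ}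

theorem integral_Ioi_integral_max_sub_rpow_one_div_mul [SFinite ν] (hp : Measurable p)
    (hq : Measurable q) (hppos : ∀ z, 0 < p z) (hqpos : ∀ z, 0 < q z)
    (hpi : Integrable p ν) (hs : 0 < s) :
    ∫ t in Ioi (0 : ℝ), ∫ z, max (p z - t ^ (1 / s) * q z) 0 ∂ν =
      (∫ z, (p z / q z) ^ s * p z ∂ν) / (s + 1) := by
  set G : ℝ → ℝ≥0∞ := fun t => ∫⁻ z, ENNReal.ofReal (p z - t ^ (1 / s) * q z) ∂ν
  have hjoint :
      Measurable fun x : ℝ × Z => ENNReal.ofReal (p x.2 - x.1 ^ (1 / s) * q x.2) := by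
    fun_prop
  have hinner : ∀ t, ∫ z, max (p z - t ^ (1 / s) * q z) 0 ∂ν = (G t).toReal := fun t => by
    rw [integral_eq_lintegral_of_nonneg_ae (ae_of_all _ fun z => le_max_right _ 0)
      (by fun_prop : Measurable fun z => max (p z - t ^ (1 / s) * q z) 0).aestronglyMeasurable]
    simp [G]
  have hG_lt_top : ∀ t ∈ Ioi (0 : ℝ), G t < ∞ := fun t ht =>
    (lintegral_mono fun z => ENNReal.ofReal_le_ofReal (sub_le_self _ <|
      mul_nonneg (rpow_nonneg (le_of_lt ht) _) (hqpos z).le)).trans_lt hpi.lintegral_lt_top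
  have hswap :
      ∫⁻ t in Ioi 0, G t = ∫⁻ z, ENNReal.ofReal ((p z / q z) ^ s * p z / (s + 1)) ∂ν := by
    rw [lintegral_lintegral_swap hjoint.aemeasurable]
    exact lintegral_congr fun z =>
      lintegral_Ioi_ofReal_sub_rpow_one_div_mul (hppos z) (hqpos z) hs
  rw [setIntegral_congr_fun measurableSet_Ioi fun t _ => hinner t,
    integral_toReal (by fun_prop) ((ae_restrict_mem measurableSet_Ioi).mono hG_lt_top), hswap,
    integral_eq_lintegral_of_nonneg_ae (ae_of_all _ fun z =>
      mul_nonneg (rpow_nonneg (div_pos (hppos z) (hqpos z)).le _) (hppos z).le) (by fun_prop)]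
  simp_rw [ENNReal.ofReal_div_of_pos (by positivity : 0 < s + 1), div_eq_mul_inv]
  rw [lintegral_mul_const' _ _ (ENNReal.inv_ne_top.2 (ENNReal.ofReal_pos.2 (by positivity)).ne'),
    ENNReal.toReal_mul, ENNReal.toReal_inv, ENNReal.toReal_ofReal (by positivity)]

end

theorem mgf_eq_hsDiv_integral_general {Z : Type*} [MeasurableSpace Z] (ν : Measure Z)
    (p q : Z → ℝ) (hp : Measurable p) (hq : Measurable q)
    (hppos : ∀ z, 0 < p z) (hqpos : ∀ z, 0 < q z)
    (hμ : IsProbabilityMeasure (ν.withDensity fun z => ENNReal.ofReal (p z)))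
    (s : ℝ) (hs : 0 < s) :
    ∫ z, exp (s * Real.log (p z / q z))
        ∂(ν.withDensity fun z => ENNReal.ofReal (p z))
      = (s + 1) * ∫ t in Set.Ioi (0 : ℝ),
          ∫ z, max (p z - t ^ (1 / s) * q z) 0 ∂ν := by
  have hdens : Measurable fun z => ENNReal.ofReal (p z) := by fun_prop
  have : SFinite ν := sFinite_of_absolutelyContinuous <|
    withDensity_absolutelyContinuous' hdens.aemeasurable
      (ae_of_all _ fun z => ENNReal.ofReal_ne_zero_iff.2 (hppos z))
  have hpi : Integrable p ν := by
    refine (lintegral_ofReal_ne_top_iff_integrable hp.aestronglyMeasurable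
      (ae_of_all _ fun z => (hppos z).le)).1 ?_
    rw [← setLIntegral_univ, ← withDensity_apply _ MeasurableSet.univ, measure_univ]
    exact ENNReal.one_ne_top
  rw [integral_Ioi_integral_max_sub_rpow_one_div_mul hp hq hppos hqpos hpi hs,
    integral_withDensity_eq_integral_toReal_smul hdens (ae_of_all _ fun _ => ENNReal.ofReal_lt_top),
    mul_div_cancel₀ _ (by positivity : s + 1 ≠ 0)]
  congr 1 with z
  rw [smul_eq_mul, ENNReal.toReal_ofReal (hppos z).le,
    rpow_def_of_pos (div_pos (hppos z) (hqpos z)), mul_comm (log _), mul_comm]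

/-- Intermediate MGF identity: `φ(s) = (s+1) ∫₀^∞ D_{t^{1/s}}(μ‖μ') dt` for `s > 0`,
where `D_α(μ‖μ') = ∫ max(p - αq, 0)` is defined for all `α > 0`. -/
theorem mgf_eq_hsDiv_integral {Z : Type*} [MeasurableSpace Z] (ν : Measure Z)
    (p q : Z → ℝ) (hp : Measurable p) (hq : Measurable q)
    (hppos : ∀ z, 0 < p z) (hqpos : ∀ z, 0 < q z)
    (hμ : IsProbabilityMeasure (ν.withDensity fun z => ENNReal.ofReal (p z)))
    (hμ' : IsProbabilityMeasure (ν.withDensity fun z => ENNReal.ofReal (q z)))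
    (s : ℝ) (hs : 0 < s) :
    ∫ z, exp (s * Real.log (p z / q z))
        ∂(ν.withDensity fun z => ENNReal.ofReal (p z))
      = (s + 1) * ∫ t in Set.Ioi (0 : ℝ),
          ∫ z, max (p z - t ^ (1 / s) * q z) 0 ∂ν :=
  mgf_eq_hsDiv_integral_general ν p q hp hq hppos hqpos hμ s hs
end

section
/- Distance-compatible coupling optimality: let ν, ν' be finitely supported probability measures on a metric space (Y, d_Y), let δ_k (k ≥ 1) be a monotonically nondecreasing sequence in [0,1] with δ_0 = 0, and define cost(π) = Σ_{y,y'} π(y,y') δ_{d_Y(y,y')} for couplings π of (ν, ν'). If there exists a coupling π* such that d_Y(y,y') = d_Y(y, supp(ν')) for all (y,y') ∈ supp(π*), then min over all couplings π of cost(π) equals Σ_{k≥1} ν(Y_k) δ_k, where Y_k = { y ∈ supp(ν) : d_Y(y, supp(ν')) = k }. -/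
open Real

/-- Distance-compatible coupling optimality: if there exists a coupling `pl*` of
`(ν, ν')` supported on pairs `(y, y')` with `d(y, y') = d(y, supp ν')`, then the
minimum over all couplings `pl` of `Σ_{y,y'} pl(y,y') δ_{d(y,y')}` is attained and
equals `Σ_k ν(Y_k) δ_k` where `Y_k = {y : d(y, supp ν') = k}`. -/
theorem distance_compatible_coupling_optimality {Y : Type*} [Fintype Y]
    (d : Y → Y → ℕ) (ν ν' : Y → ℝ)
    (hν : ∀ y, 0 ≤ ν y) (hν' : ∀ y, 0 ≤ ν' y)
    (hν1 : ∑ y, ν y = 1) (hν'1 : ∑ y, ν' y = 1)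
    (δ : ℕ → ℝ) (hδmono : Monotone δ) (hδ0 : δ 0 = 0)
    (hδ01 : ∀ k, δ k ∈ Set.Icc (0:ℝ) 1)
    (hcompat : ∃ pl : Y → Y → ℝ,
      ((∀ y y', 0 ≤ pl y y') ∧ (∀ y, ∑ y', pl y y' = ν y) ∧
        (∀ y', ∑ y, pl y y' = ν' y')) ∧
      ∀ y y', 0 < pl y y' → d y y' = sInf ((d y) '' {y' | 0 < ν' y'})) :
    IsLeast
      {c : ℝ | ∃ pl : Y → Y → ℝ,
        ((∀ y y', 0 ≤ pl y y') ∧ (∀ y, ∑ y', pl y y' = ν y) ∧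
          (∀ y', ∑ y, pl y y' = ν' y')) ∧
        c = ∑ y, ∑ y', pl y y' * δ (d y y')}
      (∑ y, ν y * δ (sInf ((d y) '' {y' | 0 < ν' y'}))) := by
  classical
  constructor
  · obtain ⟨pl, ⟨hpos, hrow, hcol⟩, hcomp⟩ := hcompat
    refine ⟨pl, ⟨hpos, hrow, hcol⟩, ?_⟩
    refine Finset.sum_congr rfl fun y _ => ?_
    rw [← hrow y, Finset.sum_mul]
    refine Finset.sum_congr rfl fun y' _ => ?_
    rcases eq_or_lt_of_le (hpos y y') with h | h
    · rw [← h]; ring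
    · rw [hcomp y y' h]
  · rintro c ⟨pl, ⟨hpos, hrow, hcol⟩, rfl⟩
    refine Finset.sum_le_sum fun y _ => ?_
    rw [← hrow y, Finset.sum_mul]
    refine Finset.sum_le_sum fun y' _ => ?_
    rcases eq_or_lt_of_le (hpos y y') with h | h
    · rw [← h]; simp
    · refine mul_le_mul_of_nonneg_left (hδmono ?_) (le_of_lt h)
      refine Nat.sInf_le ⟨y', ?_, rfl⟩
      have hle : pl y y' ≤ ν' y' := by
        rw [← hcol y']
        exact Finset.single_le_sum (fun z _ => hpos z y') (Finset.mem_univ y)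
      exact lt_of_lt_of_le h hle
end
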